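/- Let G ≤ GL_2(Ẑ) be open with G ≤ G^ag, and let H ≤ G^ag be an open subgroup with SL_2(Ẑ) ∩ G = SL_2(Ẑ) ∩ H and [G^ag,G^ag] ≤ H. Then G = {g ∈ G^ag : det(g) ∈ det(G) and γ_G(det(g)) = gH}, where γ_G : det(G) → G^ag/H is the homomorphism sending det(g) to gH for g ∈ G. -/

import Mathlib

open Matrix

instance factPrimesPrime (p : Nat.Primes) : Fact (p.1.Prime) := ⟨p.2⟩

/-- The profinite completion `Ẑ` of `ℤ`, realized as the product of all `ℤ_p`. -/
abbrev ZHat : Type := ∀ p : Nat.Primes, ℤ_[p.1]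

/-- `GL₂(Ẑ)`. -/
abbrev GL2 : Type := GL (Fin 2) ZHat

/-- The determinant homomorphism `GL₂(Ẑ) →* Ẑˣ`. -/
noncomputable def detGL2 : GL2 →* ZHatˣ := Matrix.GeneralLinearGroup.det

/-- `SL₂(Ẑ)` as the kernel of the determinant inside `GL₂(Ẑ)`. -/
noncomputable def SL2 : Subgroup GL2 := detGL2.ker

/-- The scalar matrices homomorphism `Ẑˣ →* GL₂(Ẑ)`. -/
noncomputable def scalarGL2 : ZHatˣ →* GL2 :=
  Units.map (Matrix.scalar (Fin 2) (α := ZHat)).toMonoidHom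

/-- The underlying matrix of an element of `GL₂(Ẑ)`. -/
abbrev mat (g : GL2) : Matrix (Fin 2) (Fin 2) ZHat := g.val

theorem Subgroup.mem_of_inv_mul_mem_of_ker_inf_eq {M N : Type*} [Group M] [Group N]
    (f : M →* N) {G H : Subgroup M} (hGH : f.ker ⊓ G = f.ker ⊓ H) {g g₀ : M}
    (hg₀ : g₀ ∈ G) (hf : f g₀ = f g) (hH : g₀⁻¹ * g ∈ H) : g ∈ G := by
  have hker : g₀⁻¹ * g ∈ f.ker := by
    rw [MonoidHom.mem_ker, map_mul, map_inv, hf, inv_mul_cancel]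
  have hG : g₀⁻¹ * g ∈ G := (hGH ▸ ⟨hker, hH⟩ : g₀⁻¹ * g ∈ f.ker ⊓ G).2
  simpa using mul_mem hg₀ hG

theorem stmt8_general (G Gag H : Subgroup GL2)
    (hGGag : G ≤ Gag)
    (hSL : SL2 ⊓ G = SL2 ⊓ H) :
    (G : Set GL2) = {g : GL2 | ∃ hg : g ∈ Gag, ∃ g₀ : GL2, ∃ hg₀ : g₀ ∈ G,
      detGL2 g₀ = detGL2 g ∧
      (QuotientGroup.mk (⟨g, hg⟩ : Gag) : (↥Gag) ⧸ H.subgroupOf Gag) =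
        QuotientGroup.mk (⟨g₀, hGGag hg₀⟩ : Gag)} := by
  ext g
  constructor
  · intro hg
    exact ⟨hGGag hg, g, hg, rfl, rfl⟩
  · rintro ⟨hg, g₀, hg₀, hdet, hcoset⟩
    have hH : g₀⁻¹ * g ∈ H := by
      simpa [Subgroup.mem_subgroupOf] using QuotientGroup.eq.mp hcoset.symm
    exact Subgroup.mem_of_inv_mul_mem_of_ker_inf_eq detGL2 hSL hg₀ hdet hH

/-- With `G ≤ Gag`, `H ≤ Gag`, `SL₂(Ẑ) ∩ G = SL₂(Ẑ) ∩ H` and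
`[Gag,Gag] ≤ H`, the group `G` is recovered as
`G = {g ∈ Gag : det(g) ∈ det(G) and γ_G(det g) = gH}`; concretely, `g ∈ G` iff
`g ∈ Gag` and there is `g₀ ∈ G` with `det g₀ = det g` and `gH = g₀H`. -/
theorem stmt8 (G Gag H : Subgroup GL2) (hopen : IsOpen (G : Set GL2))
    (hGGag : G ≤ Gag) (hHGag : H ≤ Gag)
    (hSL : SL2 ⊓ G = SL2 ⊓ H)
    (hcomm : ⁅Gag, Gag⁆ ≤ H)
    [hn : (H.subgroupOf Gag).Normal] :
    (G : Set GL2) = {g : GL2 | ∃ hg : g ∈ Gag, ∃ g₀ : GL2, ∃ hg₀ : g₀ ∈ G,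
      detGL2 g₀ = detGL2 g ∧
      (QuotientGroup.mk (⟨g, hg⟩ : Gag) : (↥Gag) ⧸ H.subgroupOf Gag) =
        QuotientGroup.mk (⟨g₀, hGGag hg₀⟩ : Gag)} :=
  stmt8_general G Gag H hGGag hSL
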